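/- arXiv:1603.04605 — 3 statements merged into one kernel-verified Lean document; each statement's English description precedes it below -/
import Mathlib

section
/- If the polytope P = {ξ ∈ ℝ^r : Cξ ≤ d} is compact (equivalently, Cξ ≤ 0 implies ξ = 0), 0 < δ ≤ min_i dⁱ, and the weight vector w ∈ ℝ^q has nonnegative entries and satisfies the recentering condition Cᵀ·diag(1/d¹,…,1/d^q)·(𝟙+w) = 0, then the recentered relaxed barrier function B̂_P is positive definite: B̂_P(0) = 0, its gradient vanishes at 0, and B̂_P(ξ) > 0 for every ξ ≠ 0. -/
/-!
For `0 < δ ≤ d`, the relaxed barrier `Bhat δ` lies above the tangent line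
`z ↦ -log d - (z - d) / d` of `-log` at `d`, strictly away from `d`. Substituting
`z = -(Cξ)ⁱ + dⁱ` and summing with the weights `1 + wⁱ`, the tangent lines add up to
`⟪Cᵀ diag(1/d)(𝟙 + w), ξ⟫`, which the recentering condition makes vanish. Hence
`B̂_P ≥ 0 = B̂_P(0)`, so the origin is a minimum and the gradient vanishes there. For `ξ ≠ 0`
compactness gives `Cξ ≠ 0`, and the summand of a nonzero entry of `Cξ` is strictly above its tangent.
-/

open Matrix

/-- The relaxed logarithmic barrier function with relaxation parameter `δ`. -/
noncomputable def Bhat (δ z : ℝ) : ℝ :=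
  if δ < z then -Real.log z
  else (1 / 2) * (((z - 2 * δ) / δ) ^ 2 - 1) - Real.log δ

/-- The (weighting-)recentered relaxed logarithmic barrier function for the polytope
`P = {ξ : C ξ ≤ d}`:  `B̂_P(ξ) = Σ_i (1 + wⁱ)(B̂(−Cⁱξ + dⁱ) + ln dⁱ)`. -/
noncomputable def BhatP {q r : ℕ} (δ : ℝ) (C : Matrix (Fin q) (Fin r) ℝ)
    (d w : Fin q → ℝ) (ξ : Fin r → ℝ) : ℝ :=
  ∑ i, (1 + w i) * (Bhat δ (-(C.mulVec ξ i) + d i) + Real.log (d i))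

theorem Real.log_lt_log_add_sub_div {z d : ℝ} (hz : 0 < z) (hd : 0 < d) (hzd : z ≠ d) :
    Real.log z < Real.log d + (z - d) / d := by
  have hlt := Real.log_lt_sub_one_of_pos (div_pos hz hd) (by rwa [ne_eq, div_eq_one_iff_eq hd.ne'])
  rw [Real.log_div hz.ne' hd.ne'] at hlt
  have : z / d - 1 = (z - d) / d := by field_simp
  linarith

theorem Real.log_le_log_add_sub_div {z d : ℝ} (hz : 0 < z) (hd : 0 < d) :
    Real.log z ≤ Real.log d + (z - d) / d := by
  rcases eq_or_ne z d with rfl | hzd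
  · simp
  · exact (Real.log_lt_log_add_sub_div hz hd hzd).le

theorem Bhat_of_lt {δ z : ℝ} (h : δ < z) : Bhat δ z = -Real.log z := by
  simp [Bhat, h]

theorem Bhat_of_le {δ z : ℝ} (hδ : δ ≠ 0) (h : z ≤ δ) :
    Bhat δ z = -Real.log δ - (z - δ) / δ + (z - δ) ^ 2 / (2 * δ ^ 2) := by
  simp only [Bhat, if_neg h.not_gt]
  field_simp
  ring

theorem Bhat_self_of_le {δ d : ℝ} (hδ : 0 < δ) (hδd : δ ≤ d) : Bhat δ d = -Real.log d := by
  rcases hδd.lt_or_eq with hlt | rfl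
  · exact Bhat_of_lt hlt
  · simp [Bhat_of_le hδ.ne' le_rfl]

theorem Bhat_neg_log_sub_div_lt {δ d z : ℝ} (hδ : 0 < δ) (hδd : δ ≤ d) (hzd : z ≠ d) :
    -Real.log d - (z - d) / d < Bhat δ z := by
  have hd : 0 < d := hδ.trans_le hδd
  by_cases h : δ < z
  · rw [Bhat_of_lt h]
    linarith [Real.log_lt_log_add_sub_div (hδ.trans h) hd hzd]
  push Not at h
  rw [Bhat_of_le hδ.ne' h]
  -- `-log` at `δ` lies above its tangent at `d`, and on `z ≤ δ` the slope `1 / δ` beats `1 / d`;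
  -- the quadratic gap is strict if `z < δ`, the logarithmic one if `z = δ ≠ d`
  have hgap : -Real.log δ - (z - δ) / δ + (z - δ) ^ 2 / (2 * δ ^ 2) - (-Real.log d - (z - d) / d)
      = (Real.log d + (δ - d) / d - Real.log δ) + ((δ - z) / δ - (δ - z) / d)
        + (z - δ) ^ 2 / (2 * δ ^ 2) := by ring
  have hslope : (δ - z) / d ≤ (δ - z) / δ := div_le_div_of_nonneg_left (by linarith) hδ hδd
  have hsq : 0 ≤ (z - δ) ^ 2 / (2 * δ ^ 2) := by positivity
  rcases h.lt_or_eq with hlt | rfl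
  · have hsq_pos : 0 < (z - δ) ^ 2 / (2 * δ ^ 2) := by
      have : z - δ ≠ 0 := sub_ne_zero.2 hlt.ne
      positivity
    linarith [Real.log_le_log_add_sub_div hδ hd]
  · linarith [Real.log_lt_log_add_sub_div hδ hd hzd]

theorem Bhat_neg_log_sub_div_le {δ d z : ℝ} (hδ : 0 < δ) (hδd : δ ≤ d) :
    -Real.log d - (z - d) / d ≤ Bhat δ z := by
  rcases eq_or_ne z d with rfl | hzd
  · simp [Bhat_self_of_le hδ hδd]
  · exact (Bhat_neg_log_sub_div_lt hδ hδd hzd).le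

noncomputable def barrierTerm (δ d w c : ℝ) : ℝ :=
  (1 + w) * (Bhat δ (-c + d) + Real.log d)

theorem barrierTerm_zero {δ d : ℝ} (hδ : 0 < δ) (hδd : δ ≤ d) (w : ℝ) :
    barrierTerm δ d w 0 = 0 := by
  simp [barrierTerm, Bhat_self_of_le hδ hδd]

theorem le_barrierTerm {δ d w : ℝ} (hδ : 0 < δ) (hδd : δ ≤ d) (hw : -1 ≤ w) (c : ℝ) :
    1 / d * (1 + w) * c ≤ barrierTerm δ d w c := by
  have htangent := Bhat_neg_log_sub_div_le (z := -c + d) hδ hδd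
  have hshift : (-c + d - d) / d = -(c / d) := by ring
  rw [barrierTerm, show 1 / d * (1 + w) * c = (1 + w) * (c / d) by ring]
  exact mul_le_mul_of_nonneg_left (by linarith) (by linarith)

theorem lt_barrierTerm {δ d w : ℝ} (hδ : 0 < δ) (hδd : δ ≤ d) (hw : -1 < w) {c : ℝ}
    (hc : c ≠ 0) : 1 / d * (1 + w) * c < barrierTerm δ d w c := by
  have htangent := Bhat_neg_log_sub_div_lt (z := -c + d) hδ hδd (by simpa using hc)
  have hshift : (-c + d - d) / d = -(c / d) := by ring
  rw [barrierTerm, show 1 / d * (1 + w) * c = (1 + w) * (c / d) by ring]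
  exact mul_lt_mul_of_pos_left (by linarith) (by linarith)

theorem BhatP_eq_sum_barrierTerm {q r : ℕ} (δ : ℝ) (C : Matrix (Fin q) (Fin r) ℝ)
    (d w : Fin q → ℝ) (ξ : Fin r → ℝ) :
    BhatP δ C d w ξ = ∑ i, barrierTerm δ (d i) (w i) ((C *ᵥ ξ) i) := rfl

theorem BhatP_zero {q r : ℕ} {δ : ℝ} (C : Matrix (Fin q) (Fin r) ℝ) {d : Fin q → ℝ}
    (w : Fin q → ℝ) (hδ : 0 < δ) (hδd : ∀ i, δ ≤ d i) : BhatP δ C d w 0 = 0 := by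
  simp [BhatP_eq_sum_barrierTerm, barrierTerm_zero hδ (hδd _)]

theorem dotProduct_mulVec_le_BhatP {q r : ℕ} {δ : ℝ} (C : Matrix (Fin q) (Fin r) ℝ)
    {d w : Fin q → ℝ} (hδ : 0 < δ) (hδd : ∀ i, δ ≤ d i) (hw : ∀ i, -1 ≤ w i) (ξ : Fin r → ℝ) :
    (fun i => 1 / d i * (1 + w i)) ⬝ᵥ (C *ᵥ ξ) ≤ BhatP δ C d w ξ :=
  Finset.sum_le_sum fun i _ => le_barrierTerm hδ (hδd i) (hw i) _

theorem dotProduct_mulVec_lt_BhatP {q r : ℕ} {δ : ℝ} {C : Matrix (Fin q) (Fin r) ℝ}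
    {d w : Fin q → ℝ} (hδ : 0 < δ) (hδd : ∀ i, δ ≤ d i) (hw : ∀ i, -1 < w i) {ξ : Fin r → ℝ}
    (hCξ : C *ᵥ ξ ≠ 0) : (fun i => 1 / d i * (1 + w i)) ⬝ᵥ (C *ᵥ ξ) < BhatP δ C d w ξ := by
  obtain ⟨i₀, hi₀⟩ := Function.ne_iff.mp hCξ
  exact Finset.sum_lt_sum (fun i _ => le_barrierTerm hδ (hδd i) (hw i).le _)
    ⟨i₀, Finset.mem_univ _, lt_barrierTerm hδ (hδd i₀) (hw i₀) hi₀⟩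

theorem recentered_relaxed_barrier_positive_definite_general
    {q r : ℕ} (δ : ℝ) (C : Matrix (Fin q) (Fin r) ℝ) (d w : Fin q → ℝ)
    (hδ : 0 < δ) (hδd : ∀ i, δ ≤ d i)
    (hw : ∀ i, 0 ≤ w i)
    (hcompact : ∀ ξ : Fin r → ℝ, C.mulVec ξ ≤ 0 → ξ = 0)
    (hrecenter : Cᵀ.mulVec (fun i => (1 / d i) * (1 + w i)) = 0) :
    BhatP δ C d w 0 = 0 ∧
    fderiv ℝ (BhatP δ C d w) 0 = 0 ∧
    (∀ ξ : Fin r → ℝ, ξ ≠ 0 → 0 < BhatP δ C d w ξ) := by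
  have hw' : ∀ i, -1 < w i := fun i => by linarith [hw i]
  have htangent_sum : ∀ ξ, (fun i => 1 / d i * (1 + w i)) ⬝ᵥ (C *ᵥ ξ) = 0 := fun ξ => by
    rw [dotProduct_mulVec, ← mulVec_transpose, hrecenter, zero_dotProduct]
  have hzero := BhatP_zero C w hδ hδd
  have hmin : IsLocalMin (BhatP δ C d w) 0 := Filter.Eventually.of_forall fun ξ => by
    rw [hzero, ← htangent_sum ξ]
    exact dotProduct_mulVec_le_BhatP C hδ hδd (fun i => (hw' i).le) ξ
  refine ⟨hzero, hmin.fderiv_eq_zero, fun ξ hξ => ?_⟩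
  have hCξ : C *ᵥ ξ ≠ 0 := fun h => hξ (hcompact ξ h.le)
  exact htangent_sum ξ ▸ dotProduct_mulVec_lt_BhatP hδ hδd hw' hCξ

/-- If the polytope `P = {ξ : Cξ ≤ d}` is compact (equivalently `Cξ ≤ 0 → ξ = 0`),
`0 < δ ≤ min_i dⁱ`, and the nonnegative weights satisfy the recentering condition
`Cᵀ diag(1/d)(𝟙+w) = 0`, then the recentered relaxed barrier function is positive
definite: it vanishes at the origin together with its gradient, and is strictly
positive away from the origin. -/
theorem recentered_relaxed_barrier_positive_definite
    {q r : ℕ} (δ : ℝ) (C : Matrix (Fin q) (Fin r) ℝ) (d w : Fin q → ℝ)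
    (hδ : 0 < δ) (hδd : ∀ i, δ ≤ d i)
    (hd : ∀ i, 0 < d i) (hw : ∀ i, 0 ≤ w i)
    (hcompact : ∀ ξ : Fin r → ℝ, C.mulVec ξ ≤ 0 → ξ = 0)
    (hrecenter : Cᵀ.mulVec (fun i => (1 / d i) * (1 + w i)) = 0) :
    BhatP δ C d w 0 = 0 ∧
    fderiv ℝ (BhatP δ C d w) 0 = 0 ∧
    (∀ ξ : Fin r → ℝ, ξ ≠ 0 → 0 < BhatP δ C d w ξ) :=
  recentered_relaxed_barrier_positive_definite_general δ C d w hδ hδd hw hcompact hrecenter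
end

section
/- (Lemma 1, part ii) For each fixed x ∈ ℝⁿ, the function U ↦ Ĵ_N(U,x) is twice continuously differentiable, and with σ := λ_min(H) > 0 and L := λ_max(H + (ε(1+w̄)/δ²)·GᵀG), where w̄ = max_i wⁱ, its Hessian satisfies σ‖v‖² ≤ vᵀ∇²_U Ĵ_N(U,x) v ≤ L‖v‖² for all U ∈ ℝ^{Nm}, x ∈ ℝⁿ, v ∈ ℝ^{Nm}; consequently Ĵ_N(·,x) is σ-strongly convex and its gradient is L-Lipschitz: ‖∇_U Ĵ_N(U₁,x) − ∇_U Ĵ_N(U₂,x)‖ ≤ L‖U₁ − U₂‖ for all U₁, U₂ ∈ ℝ^{Nm} and all x ∈ ℝⁿ. -/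
open Matrix

/-- Recentered relaxed logarithmic barrier for the combined constraints `GU ≤ d + Ex`. -/
noncomputable def Bxu {nm n q : ℕ} (δ : ℝ) (G : Matrix (Fin q) (Fin nm) ℝ)
    (E : Matrix (Fin q) (Fin n) ℝ) (d w : Fin q → ℝ)
    (U : Fin nm → ℝ) (x : Fin n → ℝ) : ℝ :=
  ∑ i, (1 + w i) * (Bhat δ (-(G.mulVec U i) + E.mulVec x i + d i) + Real.log (d i))

/-- The relaxed barrier function based MPC cost in condensed form. -/
noncomputable def Jcost {nm n q : ℕ} (δ ε : ℝ) (H : Matrix (Fin nm) (Fin nm) ℝ)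
    (F : Matrix (Fin n) (Fin nm) ℝ) (Y : Matrix (Fin n) (Fin n) ℝ)
    (G : Matrix (Fin q) (Fin nm) ℝ) (E : Matrix (Fin q) (Fin n) ℝ) (d w : Fin q → ℝ)
    (U : Fin nm → ℝ) (x : Fin n → ℝ) : ℝ :=
  (1 / 2) * (U ⬝ᵥ H.mulVec U) + x ⬝ᵥ F.mulVec U + x ⬝ᵥ Y.mulVec x +
    ε * Bxu δ G E d w U x

/-- Euclidean norm of a vector. -/
noncomputable def euclNorm {k : ℕ} (v : Fin k → ℝ) : ℝ :=
  Real.sqrt (∑ i, (v i) ^ 2)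

/-- The gradient (as a vector) of a function `f : ℝ^k → ℝ` at `U`. -/
noncomputable def gradVec {k : ℕ} (f : (Fin k → ℝ) → ℝ) (U : Fin k → ℝ) : Fin k → ℝ :=
  fun i => fderiv ℝ f U (Pi.single i 1)

/-!
Away from `z = δ` the relaxed barrier is `-log z` or a quadratic, and the two pieces agree with
their first derivatives at `δ`; so `B̂` is `C²` with `B̂''(z) = (max z δ)⁻²`, which lies in
`(0, δ⁻²]`. Hence the Hessian of `U ↦ Ĵ_N(U,x)` is `H + Σᵢ ε(1+wⁱ) B̂''(sᵢ) GᵢGᵢᵀ`, with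
`sᵢ` the `i`-th constraint slack, and it is squeezed between `H` and `H + (ε(1+w̄)/δ²)GᵀG`.
Strong convexity follows by restricting to segments, where the second derivative is at least
`σ‖U₁ - U₂‖²`; here `σ > 0` because the quadratic form of `H` has a positive minimum on the
unit sphere. For the Lipschitz bound, the mean value theorem applied to `s ↦ ∇Ĵ(γ s) ⬝ z` with
`z = ∇Ĵ(U₁) - ∇Ĵ(U₂)` gives `‖z‖² = ∇²Ĵ(ξ)(U₁ - U₂, z)`, and Cauchy–Schwarz for the
positive semidefinite form `∇²Ĵ(ξ) ≤ L` gives `‖z‖² ≤ L ‖U₁ - U₂‖ ‖z‖`.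
-/

open Matrix Set

section Calculus

variable {E F : Type*} [NormedAddCommGroup E] [NormedSpace ℝ E] [NormedAddCommGroup F]
  [NormedSpace ℝ F] {f : E → F} {f' : E → E →L[ℝ] F} {f'' : E → E →L[ℝ] E →L[ℝ] F}

theorem contDiff_two_of_hasFDerivAt (hf : ∀ U, HasFDerivAt f (f' U) U)
    (hf' : ∀ U, HasFDerivAt f' (f'' U) U) (hf'' : Continuous f'') : ContDiff ℝ 2 f :=
  contDiff_succ_iff_hasFDerivAt.2 ⟨f', contDiff_one_iff_hasFDerivAt.2 ⟨f'', hf'', hf'⟩, hf⟩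

theorem fderiv_fderiv_of_hasFDerivAt (hf : ∀ U, HasFDerivAt f (f' U) U)
    (hf' : ∀ U, HasFDerivAt f' (f'' U) U) : fderiv ℝ (fderiv ℝ f) = f'' := by
  rw [funext fun U => (hf U).fderiv]
  exact funext fun U => (hf' U).fderiv

theorem hasDerivAt_apply_lineMap (hf' : ∀ U, HasFDerivAt f' (f'' U) U) (U₁ U₂ z : E) (s : ℝ) :
    HasDerivAt (fun s => f' (AffineMap.lineMap U₂ U₁ s) z)
      (f'' (AffineMap.lineMap U₂ U₁ s) (U₁ - U₂) z) s := by
  simpa using ((hf' _).comp_hasDerivAt s AffineMap.hasDerivAt_lineMap).clm_apply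
    (hasDerivAt_const s z)

end Calculus

theorem strongConvexOn_univ_of_le_deriv2 {g g' g'' : ℝ → ℝ} {m : ℝ}
    (hg : ∀ s, HasDerivAt g (g' s) s) (hg' : ∀ s, HasDerivAt g' (g'' s) s)
    (hm : ∀ s, m ≤ g'' s) : StrongConvexOn univ m g := by
  have hh : ∀ s, HasDerivAt (fun s => g s - m / 2 * s ^ 2) (g' s - m * s) s := fun s => by
    refine ((hg s).fun_sub ((hasDerivAt_pow 2 s).const_mul (m / 2))).congr_deriv ?_
    norm_num
    ring
  have hderiv : deriv (fun s => g s - m / 2 * s ^ 2) = fun s => g' s - m * s :=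
    funext fun s => (hh s).deriv
  have hh' : ∀ s, HasDerivAt (fun s => g' s - m * s) (g'' s - m) s := fun s => by
    simpa using (hg' s).fun_sub ((hasDerivAt_id s).const_mul m)
  have hnorm : (fun s : ℝ => g s - m / 2 * ‖s‖ ^ 2) = fun s => g s - m / 2 * s ^ 2 := by
    simp [sq_abs]
  rw [strongConvexOn_iff_convex, hnorm]
  refine convexOn_univ_of_deriv2_nonneg (fun s => (hh s).differentiableAt) ?_ fun s => ?_
  · rw [hderiv]
    exact fun s => (hh' s).differentiableAt
  · rw [Function.iterate_succ_apply, Function.iterate_one, hderiv, (hh' s).deriv]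
    linarith [hm s]

section SecondOrder

variable {E : Type*} [NormedAddCommGroup E] [NormedSpace ℝ E]
  {f : E → ℝ} {f' : E → E →L[ℝ] ℝ} {f'' : E → E →L[ℝ] E →L[ℝ] ℝ}

theorem apply_smul_add_smul_le_of_le_secondDeriv (hf : ∀ U, HasFDerivAt f (f' U) U)
    (hf' : ∀ U, HasFDerivAt f' (f'' U) U) {q : E → ℝ} {m : ℝ}
    (hm : ∀ U v, m * q v ≤ f'' U v v) (U₁ U₂ : E) {t : ℝ} (ht₀ : 0 ≤ t) (ht₁ : t ≤ 1) :
    f (t • U₁ + (1 - t) • U₂) ≤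
      t * f U₁ + (1 - t) * f U₂ - m / 2 * t * (1 - t) * q (U₁ - U₂) := by
  have hg : ∀ s, HasDerivAt (fun s => f (AffineMap.lineMap U₂ U₁ s))
      (f' (AffineMap.lineMap U₂ U₁ s) (U₁ - U₂)) s := fun s =>
    (hf _).comp_hasDerivAt s AffineMap.hasDerivAt_lineMap
  have hconv := strongConvexOn_univ_of_le_deriv2 hg (hasDerivAt_apply_lineMap hf' U₁ U₂ _)
    fun s => hm _ (U₁ - U₂)
  have := hconv.2 (mem_univ 1) (mem_univ 0) ht₀ (sub_nonneg.2 ht₁) (add_sub_cancel t 1)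
  simp only [AffineMap.lineMap_apply_module, smul_eq_mul, mul_one, mul_zero, add_zero, sub_zero,
    sub_self, zero_smul, one_smul, zero_add, norm_one, one_pow] at this
  rw [add_comm] at this
  linarith

theorem exists_apply_sub_apply_eq_of_hasFDerivAt (hf' : ∀ U, HasFDerivAt f' (f'' U) U)
    (U₁ U₂ z : E) :
    ∃ U, f' U₁ z - f' U₂ z = f'' U (U₁ - U₂) z := by
  have h := hasDerivAt_apply_lineMap hf' U₁ U₂ z
  obtain ⟨s, -, hs⟩ := exists_hasDerivAt_eq_slope (fun s => f' (AffineMap.lineMap U₂ U₁ s) z)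
    (fun s => f'' (AffineMap.lineMap U₂ U₁ s) (U₁ - U₂) z) zero_lt_one
    (continuous_iff_continuousAt.2 fun s => (h s).continuousAt).continuousOn fun s _ => h s
  exact ⟨_, by simpa using hs.symm⟩

theorem sq_apply_le_apply_self_mul_apply_self {B : E →L[ℝ] E →L[ℝ] ℝ}
    (hsymm : ∀ u v, B u v = B v u) (hnonneg : ∀ v, 0 ≤ B v v) (u v : E) :
    B u v ^ 2 ≤ B u u * B v v := by
  have hquad : ∀ r : ℝ, 0 ≤ B v v * (r * r) + 2 * B u v * r + B u u := fun r => by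
    have := hnonneg (u + r • v)
    simp only [map_add, map_smul, _root_.add_apply, _root_.smul_apply,
      smul_eq_mul, hsymm v u] at this
    linarith
  have := discrim_le_zero hquad
  rw [discrim] at this
  nlinarith

end SecondOrder

theorem Matrix.dotProduct_self_nonneg {R ι : Type*} [Ring R] [LinearOrder R]
    [IsStrictOrderedRing R] [Fintype ι] (v : ι → R) : 0 ≤ v ⬝ᵥ v :=
  Finset.sum_nonneg fun i _ => mul_self_nonneg (v i)

theorem Matrix.dotProduct_self_pos {R ι : Type*} [Ring R] [LinearOrder R]
    [IsStrictOrderedRing R] [Fintype ι] {v : ι → R} (hv : v ≠ 0) : 0 < v ⬝ᵥ v :=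
  (dotProduct_self_nonneg v).lt_of_ne' (mt dotProduct_self_eq_zero.1 hv)

theorem Matrix.IsSymm.mulVec_dotProduct {R ι : Type*} [CommSemiring R] [Fintype ι]
    {H : Matrix ι ι R} (hH : H.IsSymm) (u v : ι → R) : H *ᵥ u ⬝ᵥ v = u ⬝ᵥ H *ᵥ v := by
  rw [dotProduct_mulVec, ← mulVec_transpose, hH.eq]

theorem dotProduct_mulVec_transpose_mul_self {R ι κ : Type*} [CommSemiring R] [Fintype ι]
    [Fintype κ] (G : Matrix κ ι R) (v : ι → R) : v ⬝ᵥ (Gᵀ * G) *ᵥ v = ∑ i, (G i ⬝ᵥ v) ^ 2 := by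
  rw [← mulVec_mulVec, dotProduct_mulVec, vecMul_transpose]
  simp only [dotProduct, sq]
  rfl

theorem exists_pos_mul_norm_sq_le {E : Type*} [NormedAddCommGroup E] [NormedSpace ℝ E]
    [FiniteDimensional ℝ E] {Q : E → ℝ} (hQ : Continuous Q)
    (hsmul : ∀ (a : ℝ) v, Q (a • v) = a ^ 2 * Q v) (hpos : ∀ v ≠ 0, 0 < Q v) :
    ∃ c > 0, ∀ v, c * ‖v‖ ^ 2 ≤ Q v := by
  obtain ⟨c, hc, hcQ⟩ := (isCompact_sphere (0 : E) 1).exists_forall_le' hQ.continuousOn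
    fun v hv => hpos v (ne_zero_of_mem_unit_sphere ⟨v, hv⟩)
  refine ⟨c, hc, fun v => ?_⟩
  rcases eq_or_ne v 0 with rfl | hv
  · simp [show Q 0 = 0 by simpa using hsmul 0 0]
  · have hu : ‖v‖⁻¹ • v ∈ Metric.sphere (0 : E) 1 := by simp [norm_smul, hv]
    calc c * ‖v‖ ^ 2 ≤ Q (‖v‖⁻¹ • v) * ‖v‖ ^ 2 := by gcongr; exact hcQ _ hu
      _ = Q v := by rw [hsmul]; field_simp

theorem Matrix.exists_pos_mul_dotProduct_self_le {ι : Type*} [Fintype ι]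
    (H : Matrix ι ι ℝ) (hH : ∀ v : ι → ℝ, v ≠ 0 → 0 < v ⬝ᵥ H *ᵥ v) :
    ∃ c > 0, ∀ v : ι → ℝ, c * (v ⬝ᵥ v) ≤ v ⬝ᵥ H *ᵥ v := by
  obtain ⟨c, hc, h⟩ := exists_pos_mul_norm_sq_le (E := EuclideanSpace ℝ ι)
    (Q := fun v => v.ofLp ⬝ᵥ H *ᵥ v.ofLp) (by fun_prop)
    (fun a v => by
      simp only [WithLp.ofLp_smul, mulVec_smul, dotProduct_smul, smul_dotProduct, smul_eq_mul]
      ring) (fun v hv => hH _ (by simpa using hv))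
  refine ⟨c, hc, fun v => ?_⟩
  have := h (WithLp.toLp 2 v)
  rw [EuclideanSpace.real_norm_sq_eq] at this
  simpa [dotProduct, sq] using this

noncomputable def dotProductCLM {ι : Type*} [Fintype ι] : (ι → ℝ) →L[ℝ] (ι → ℝ) →L[ℝ] ℝ :=
  LinearMap.toContinuousLinearMap
    ((LinearMap.toContinuousLinearMap : ((ι → ℝ) →ₗ[ℝ] ℝ) ≃ₗ[ℝ] _).toLinearMap ∘ₗ
      dotProductBilin ℝ ℝ)

@[simp] theorem dotProductCLM_apply {ι : Type*} [Fintype ι] (u v : ι → ℝ) :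
    dotProductCLM u v = u ⬝ᵥ v :=
  rfl

theorem hasFDerivAt_half_dotProduct_mulVec {ι : Type*} [Fintype ι] {H : Matrix ι ι ℝ}
    (hH : H.IsSymm) (U : ι → ℝ) :
    HasFDerivAt (fun U => 1 / 2 * (U ⬝ᵥ H *ᵥ U)) (dotProductCLM (H *ᵥ U)) U := by
  refine ((dotProductCLM.hasFDerivAt_of_bilinear (hasFDerivAt_id U)
    (LinearMap.toContinuousLinearMap (mulVecLin H)).hasFDerivAt).const_mul (1 / 2)).congr_fderiv ?_
  ext v
  change 1 / 2 * (U ⬝ᵥ H *ᵥ v + v ⬝ᵥ H *ᵥ U) = H *ᵥ U ⬝ᵥ v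
  rw [← hH.mulVec_dotProduct U v, dotProduct_comm v]
  ring

theorem gradVec_dotProduct {k : ℕ} (f : (Fin k → ℝ) → ℝ) (U z : Fin k → ℝ) :
    gradVec f U ⬝ᵥ z = fderiv ℝ f U z := by
  conv_rhs => rw [← Finset.univ_sum_single z]
  simp only [gradVec, dotProduct, map_sum]
  refine Finset.sum_congr rfl fun i _ => ?_
  rw [mul_comm, ← smul_eq_mul, ← map_smul, ← Pi.single_smul, smul_eq_mul, mul_one]

theorem euclNorm_eq_sqrt_dotProduct {k : ℕ} (v : Fin k → ℝ) : euclNorm v = √(v ⬝ᵥ v) := by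
  simp [euclNorm, dotProduct, sq]

theorem euclNorm_gradVec_sub_le {k : ℕ} {f : (Fin k → ℝ) → ℝ}
    {f' : (Fin k → ℝ) → (Fin k → ℝ) →L[ℝ] ℝ}
    {f'' : (Fin k → ℝ) → (Fin k → ℝ) →L[ℝ] (Fin k → ℝ) →L[ℝ] ℝ} {L : ℝ}
    (hf : ∀ U, HasFDerivAt f (f' U) U) (hf' : ∀ U, HasFDerivAt f' (f'' U) U)
    (hsymm : ∀ U u v, f'' U u v = f'' U v u) (hnonneg : ∀ U v, 0 ≤ f'' U v v)
    (hle : ∀ U v, f'' U v v ≤ L * (v ⬝ᵥ v)) (U₁ U₂ : Fin k → ℝ) :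
    euclNorm (gradVec f U₁ - gradVec f U₂) ≤ L * euclNorm (U₁ - U₂) := by
  rcases eq_or_ne U₁ U₂ with rfl | hne
  · simp [euclNorm]
  set z := gradVec f U₁ - gradVec f U₂
  set D := U₁ - U₂
  obtain ⟨U, hU⟩ := exists_apply_sub_apply_eq_of_hasFDerivAt hf' U₁ U₂ z
  have hzz : z ⬝ᵥ z = f'' U D z := by
    rw [← hU, sub_dotProduct, gradVec_dotProduct, gradVec_dotProduct, (hf U₁).fderiv,
      (hf U₂).fderiv]
  have hD : 0 < D ⬝ᵥ D := dotProduct_self_pos (sub_ne_zero.2 hne)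
  have hL : 0 ≤ L := nonneg_of_mul_nonneg_left ((hnonneg U D).trans (hle U D)) hD
  have hsq : (z ⬝ᵥ z) ^ 2 ≤ (L * (D ⬝ᵥ D)) * (L * (z ⬝ᵥ z)) :=
    calc (z ⬝ᵥ z) ^ 2 = f'' U D z ^ 2 := by rw [hzz]
      _ ≤ f'' U D D * f'' U z z := sq_apply_le_apply_self_mul_apply_self (hsymm U) (hnonneg U) D z
      _ ≤ (L * (D ⬝ᵥ D)) * (L * (z ⬝ᵥ z)) :=
        mul_le_mul (hle U D) (hle U z) (hnonneg U z) (by positivity)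
  have hzD : z ⬝ᵥ z ≤ L ^ 2 * (D ⬝ᵥ D) := by
    rcases (dotProduct_self_nonneg z).eq_or_lt with hz | hz
    · rw [← hz]; positivity
    · exact le_of_mul_le_mul_right (by nlinarith) hz
  rw [euclNorm_eq_sqrt_dotProduct, euclNorm_eq_sqrt_dotProduct]
  calc √(z ⬝ᵥ z) ≤ √(L ^ 2 * (D ⬝ᵥ D)) := Real.sqrt_le_sqrt hzD
    _ = L * √(D ⬝ᵥ D) := by rw [Real.sqrt_mul (sq_nonneg L), Real.sqrt_sq hL]

theorem hasDerivAt_ite_lt {a : ℝ} {f g f' g' : ℝ → ℝ}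
    (hf : ∀ z, a ≤ z → HasDerivAt f (f' z) z) (hg : ∀ z, z ≤ a → HasDerivAt g (g' z) z)
    (hfg : f a = g a) (hfg' : f' a = g' a) (z : ℝ) :
    HasDerivAt (fun y => if a < y then f y else g y) (if a < z then f' z else g' z) z := by
  rcases lt_trichotomy a z with h | rfl | h
  · rw [if_pos h]
    refine (hf z h.le).congr_of_eventuallyEq ?_
    filter_upwards [eventually_gt_nhds h] with y hy
    simp [hy]
  · have hIic : HasDerivWithinAt (fun y => if a < y then f y else g y) (g' a) (Iic a) a :=
      (hg a le_rfl).hasDerivWithinAt.congr (fun y hy => if_neg (not_lt.2 hy))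
        (if_neg (lt_irrefl a))
    have hIci : HasDerivWithinAt (fun y => if a < y then f y else g y) (g' a) (Ici a) a := by
      refine hfg' ▸ (hf a le_rfl).hasDerivWithinAt.congr (fun y hy => ?_) (by simp [hfg])
      rcases (mem_Ici.1 hy).eq_or_lt with rfl | hy
      · simp [hfg]
      · simp [hy]
    rw [if_neg (lt_irrefl a), ← hasDerivWithinAt_univ, ← Iic_union_Ici]
    exact hIic.union hIci
  · rw [if_neg (not_lt.2 h.le)]
    refine (hg z h.le).congr_of_eventuallyEq ?_
    filter_upwards [eventually_lt_nhds h] with y hy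
    simp [not_lt.2 hy.le]

noncomputable def barrierDeriv (δ z : ℝ) : ℝ :=
  if δ < z then -z⁻¹ else (z - 2 * δ) / δ ^ 2

noncomputable def barrierDeriv2 (δ z : ℝ) : ℝ :=
  (max z δ ^ 2)⁻¹

section Barrier

variable {δ : ℝ}

theorem hasDerivAt_Bhat (hδ : 0 < δ) (z : ℝ) : HasDerivAt (Bhat δ) (barrierDeriv δ z) z := by
  have hquad (y : ℝ) : HasDerivAt (fun y => 1 / 2 * (((y - 2 * δ) / δ) ^ 2 - 1) - Real.log δ)
      ((y - 2 * δ) / δ ^ 2) y := by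
    refine (((((hasDerivAt_id' y).sub_const (2 * δ)).div_const δ).pow 2).sub_const 1
      |>.const_mul (1 / 2) |>.sub_const (Real.log δ)).congr_deriv ?_
    norm_num
    field_simp
  refine hasDerivAt_ite_lt (fun y hy => (Real.hasDerivAt_log (hδ.trans_le hy).ne').fun_neg)
    (fun y _ => hquad y) ?_ ?_ z
  · field_simp
    ring
  · field_simp
    ring

theorem hasDerivAt_barrierDeriv (hδ : 0 < δ) (z : ℝ) :
    HasDerivAt (barrierDeriv δ) (barrierDeriv2 δ z) z := by
  refine (hasDerivAt_ite_lt (f' := fun y => (y ^ 2)⁻¹) (g' := fun _ => (δ ^ 2)⁻¹)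
    (fun y hy => by simpa using (hasDerivAt_inv (hδ.trans_le hy).ne').fun_neg)
    (fun y _ => by simpa using ((hasDerivAt_id' y).sub_const (2 * δ)).div_const (δ ^ 2))
    (by field_simp; ring) rfl z).congr_deriv ?_
  rw [barrierDeriv2]
  split_ifs with hz
  · rw [max_eq_left hz.le]
  · rw [max_eq_right (not_lt.1 hz)]

theorem continuous_barrierDeriv2 (hδ : 0 < δ) : Continuous (barrierDeriv2 δ) :=
  (continuous_id.max continuous_const).pow 2 |>.inv₀ fun _ =>
    (pow_pos (lt_max_of_lt_right hδ) 2).ne'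

theorem barrierDeriv2_nonneg (z : ℝ) : 0 ≤ barrierDeriv2 δ z := by
  unfold barrierDeriv2
  positivity

theorem barrierDeriv2_le (hδ : 0 < δ) (z : ℝ) : barrierDeriv2 δ z ≤ (δ ^ 2)⁻¹ :=
  inv_anti₀ (by positivity) (pow_le_pow_left₀ hδ.le (le_max_right z δ) 2)

end Barrier

section Cost

variable {nm n q : ℕ} (δ ε : ℝ) (H : Matrix (Fin nm) (Fin nm) ℝ)
  (F : Matrix (Fin n) (Fin nm) ℝ) (Y : Matrix (Fin n) (Fin n) ℝ) (G : Matrix (Fin q) (Fin nm) ℝ)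
  (E : Matrix (Fin q) (Fin n) ℝ) (d w : Fin q → ℝ) (x : Fin n → ℝ)

noncomputable def slack (U : Fin nm → ℝ) (i : Fin q) : ℝ :=
  -(G *ᵥ U) i + (E *ᵥ x) i + d i

noncomputable def costGrad (U : Fin nm → ℝ) : (Fin nm → ℝ) →L[ℝ] ℝ :=
  dotProductCLM (H *ᵥ U + x ᵥ* F -
    ∑ i, (ε * (1 + w i) * barrierDeriv δ (slack G E d x U i)) • G i)

noncomputable def costHessian (U : Fin nm → ℝ) :
    (Fin nm → ℝ) →L[ℝ] (Fin nm → ℝ) →L[ℝ] ℝ :=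
  dotProductCLM ∘L LinearMap.toContinuousLinearMap (mulVecLin H) +
    ∑ i, (ε * (1 + w i) * barrierDeriv2 δ (slack G E d x U i)) •
      (dotProductCLM (G i)).smulRight (dotProductCLM (G i))

variable {δ ε H F Y G E d w x}

@[simp] theorem costHessian_apply (U v u : Fin nm → ℝ) :
    costHessian δ ε H G E d w x U v u = H *ᵥ v ⬝ᵥ u +
      ∑ i, ε * (1 + w i) * barrierDeriv2 δ (slack G E d x U i) * ((G i ⬝ᵥ v) * (G i ⬝ᵥ u)) := by
  simp [costHessian]

theorem hasFDerivAt_slack (i : Fin q) (U : Fin nm → ℝ) :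
    HasFDerivAt (fun U => slack G E d x U i) (-dotProductCLM (G i)) U :=
  ((dotProductCLM (G i)).hasFDerivAt.neg.add_const _).add_const _

theorem hasFDerivAt_Jcost (hδ : 0 < δ) (hH : H.IsSymm) (U : Fin nm → ℝ) :
    HasFDerivAt (fun U => Jcost δ ε H F Y G E d w U x) (costGrad δ ε H F G E d w x U) U := by
  have hlin : HasFDerivAt (fun U => x ⬝ᵥ F *ᵥ U) (dotProductCLM (x ᵥ* F)) U := by
    simp_rw [dotProduct_mulVec]
    exact (dotProductCLM (x ᵥ* F)).hasFDerivAt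
  have hbarrier : HasFDerivAt (fun U => Bxu δ G E d w U x)
      (∑ i, (1 + w i) • barrierDeriv δ (slack G E d x U i) • -dotProductCLM (G i)) U :=
    HasFDerivAt.fun_sum fun i _ =>
      ((hasDerivAt_Bhat hδ _).comp_hasFDerivAt U (hasFDerivAt_slack i U)).add_const _
        |>.const_mul _
  refine ((((hasFDerivAt_half_dotProduct_mulVec hH U).fun_add hlin).add_const _).fun_add
    (hbarrier.const_mul ε)).congr_fderiv ?_
  ext v
  simp [costGrad, Finset.mul_sum, mul_assoc, sub_eq_add_neg]

theorem hasFDerivAt_costGrad (hδ : 0 < δ) (U : Fin nm → ℝ) :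
    HasFDerivAt (costGrad δ ε H F G E d w x) (costHessian δ ε H G E d w x U) U := by
  have hvec : HasFDerivAt (fun U => H *ᵥ U + x ᵥ* F -
      ∑ i, (ε * (1 + w i) * barrierDeriv δ (slack G E d x U i)) • G i)
      (LinearMap.toContinuousLinearMap (mulVecLin H) - ∑ i,
        ((ε * (1 + w i)) • barrierDeriv2 δ (slack G E d x U i) • -dotProductCLM (G i)).smulRight
          (G i)) U :=
    ((LinearMap.toContinuousLinearMap (mulVecLin H)).hasFDerivAt.add_const _).fun_sub
      (HasFDerivAt.fun_sum fun i _ =>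
        (((hasDerivAt_barrierDeriv hδ _).comp_hasFDerivAt U (hasFDerivAt_slack i U)).const_mul
          _).smul_const _)
  refine (dotProductCLM.hasFDerivAt.comp U hvec).congr_fderiv ?_
  ext v u
  simp [mul_assoc, mul_left_comm]

theorem continuous_costHessian (hδ : 0 < δ) : Continuous (costHessian δ ε H G E d w x) := by
  have hcoeff (i : Fin q) : Continuous fun U : Fin nm → ℝ =>
      ε * (1 + w i) * barrierDeriv2 δ (slack G E d x U i) := by
    have := continuous_barrierDeriv2 hδ
    unfold slack
    fun_prop
  -- instance search does not find `ContinuousAdd` on this iterated space of linear maps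
  have hgroup : IsTopologicalAddGroup ((Fin nm → ℝ) →L[ℝ] (Fin nm → ℝ) →L[ℝ] ℝ) := inferInstance
  have : ContinuousAdd ((Fin nm → ℝ) →L[ℝ] (Fin nm → ℝ) →L[ℝ] ℝ) := hgroup.toContinuousAdd
  unfold costHessian
  fun_prop

theorem costHessian_comm (hH : H.IsSymm) (U u v : Fin nm → ℝ) :
    costHessian δ ε H G E d w x U u v = costHessian δ ε H G E d w x U v u := by
  simp only [costHessian_apply, mul_comm (G _ ⬝ᵥ u)]
  rw [hH.mulVec_dotProduct, dotProduct_comm]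

theorem dotProduct_mulVec_le_costHessian (hε : 0 ≤ ε) (hw : ∀ i, 0 ≤ w i) (U v : Fin nm → ℝ) :
    v ⬝ᵥ H *ᵥ v ≤ costHessian δ ε H G E d w x U v v := by
  rw [costHessian_apply, dotProduct_comm]
  refine le_add_of_nonneg_right (Finset.sum_nonneg fun i _ => ?_)
  have := hw i
  have := barrierDeriv2_nonneg (δ := δ) (slack G E d x U i)
  have := mul_self_nonneg (G i ⬝ᵥ v)
  positivity

theorem costHessian_le (hδ : 0 < δ) (hε : 0 ≤ ε) (hw : ∀ i, 0 ≤ w i) {wbar : ℝ}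
    (hwbar : ∀ i, w i ≤ wbar) (U v : Fin nm → ℝ) :
    costHessian δ ε H G E d w x U v v ≤
      v ⬝ᵥ (H + (ε * (1 + wbar) / δ ^ 2) • (Gᵀ * G)) *ᵥ v := by
  rw [costHessian_apply, add_mulVec, dotProduct_add, smul_mulVec, dotProduct_smul,
    dotProduct_mulVec_transpose_mul_self, smul_eq_mul, Finset.mul_sum, dotProduct_comm]
  simp only [← sq, div_eq_mul_inv]
  gcongr with i
  · exact barrierDeriv2_nonneg _
  · exact mul_nonneg hε (by linarith [hw i, hwbar i])
  · exact hwbar i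
  · exact barrierDeriv2_le hδ _

end Cost

theorem cost_hessian_bounds_and_lipschitz_gradient_general
    {nm n q : ℕ} (δ ε : ℝ) (H : Matrix (Fin nm) (Fin nm) ℝ)
    (F : Matrix (Fin n) (Fin nm) ℝ) (Y : Matrix (Fin n) (Fin n) ℝ)
    (G : Matrix (Fin q) (Fin nm) ℝ) (E : Matrix (Fin q) (Fin n) ℝ) (d w : Fin q → ℝ)
    (σ L wbar : ℝ)
    (hδ : 0 < δ) (hε : 0 < ε)
    (hw : ∀ i, 0 ≤ w i)
    (hHsymm : H.IsSymm)
    (hHpd : ∀ v : Fin nm → ℝ, v ≠ 0 → 0 < v ⬝ᵥ H.mulVec v)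
    (hwbar : IsGreatest (Set.range w) wbar)
    (hσ : IsGreatest {c : ℝ | ∀ v : Fin nm → ℝ, c * (v ⬝ᵥ v) ≤ v ⬝ᵥ H.mulVec v} σ)
    (hL : IsLeast {c : ℝ | ∀ v : Fin nm → ℝ,
      v ⬝ᵥ (H + ((ε * (1 + wbar)) / δ ^ 2) • (Gᵀ * G)).mulVec v ≤ c * (v ⬝ᵥ v)} L) :
    0 < σ ∧
    (∀ x : Fin n → ℝ, ContDiff ℝ 2 (fun U => Jcost δ ε H F Y G E d w U x)) ∧
    (∀ (x : Fin n → ℝ) (U v : Fin nm → ℝ),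
      σ * (v ⬝ᵥ v) ≤
          (fderiv ℝ (fderiv ℝ (fun U' => Jcost δ ε H F Y G E d w U' x)) U) v v ∧
        (fderiv ℝ (fderiv ℝ (fun U' => Jcost δ ε H F Y G E d w U' x)) U) v v ≤
          L * (v ⬝ᵥ v)) ∧
    (∀ (x : Fin n → ℝ) (U₁ U₂ : Fin nm → ℝ) (t : ℝ), 0 ≤ t → t ≤ 1 →
      Jcost δ ε H F Y G E d w (t • U₁ + (1 - t) • U₂) x ≤
        t * Jcost δ ε H F Y G E d w U₁ x + (1 - t) * Jcost δ ε H F Y G E d w U₂ x -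
          (σ / 2) * t * (1 - t) * ((U₁ - U₂) ⬝ᵥ (U₁ - U₂))) ∧
    (∀ (x : Fin n → ℝ) (U₁ U₂ : Fin nm → ℝ),
      euclNorm (gradVec (fun U' => Jcost δ ε H F Y G E d w U' x) U₁ -
          gradVec (fun U' => Jcost δ ε H F Y G E d w U' x) U₂) ≤
        L * euclNorm (U₁ - U₂)) := by
  obtain ⟨c, hc, hcH⟩ := H.exists_pos_mul_dotProduct_self_le hHpd
  have hσpos : 0 < σ := hc.trans_le (hσ.2 hcH)
  have hf (x : Fin n → ℝ) (U : Fin nm → ℝ) :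
      HasFDerivAt (fun U => Jcost δ ε H F Y G E d w U x) (costGrad δ ε H F G E d w x U) U :=
    hasFDerivAt_Jcost hδ hHsymm U
  have hf' (x : Fin n → ℝ) (U : Fin nm → ℝ) :
      HasFDerivAt (costGrad δ ε H F G E d w x) (costHessian δ ε H G E d w x U) U :=
    hasFDerivAt_costGrad hδ U
  have hlower (x : Fin n → ℝ) (U v : Fin nm → ℝ) :
      σ * (v ⬝ᵥ v) ≤ costHessian δ ε H G E d w x U v v :=
    (hσ.1 v).trans (dotProduct_mulVec_le_costHessian hε.le hw U v)
  have hupper (x : Fin n → ℝ) (U v : Fin nm → ℝ) :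
      costHessian δ ε H G E d w x U v v ≤ L * (v ⬝ᵥ v) :=
    (costHessian_le hδ hε.le hw (fun i => hwbar.2 (mem_range_self i)) U v).trans (hL.1 v)
  have hnonneg (x : Fin n → ℝ) (U v : Fin nm → ℝ) : 0 ≤ costHessian δ ε H G E d w x U v v :=
    (mul_nonneg hσpos.le (dotProduct_self_nonneg v)).trans (hlower x U v)
  refine ⟨hσpos, fun x => contDiff_two_of_hasFDerivAt (hf x) (hf' x) (continuous_costHessian hδ),
    fun x U v => ?_, fun x U₁ U₂ t ht₀ ht₁ =>
      apply_smul_add_smul_le_of_le_secondDeriv (hf x) (hf' x) (hlower x) U₁ U₂ ht₀ ht₁,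
    fun x => euclNorm_gradVec_sub_le (hf x) (hf' x) (costHessian_comm hHsymm) (hnonneg x)
      (hupper x)⟩
  rw [fderiv_fderiv_of_hasFDerivAt (hf x) (hf' x)]
  exact ⟨hlower x U v, hupper x U v⟩

/-- (Lemma 1, part ii) For each fixed `x`, the cost `Ĵ_N(·,x)` is twice continuously
differentiable and, with `σ = λ_min(H) > 0` and `L = λ_max(H + (ε(1+w̄)/δ²)GᵀG)` where
`w̄ = max_i wⁱ`, its Hessian satisfies `σ‖v‖² ≤ vᵀ∇²_U Ĵ_N(U,x) v ≤ L‖v‖²`; consequently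
`Ĵ_N(·,x)` is `σ`-strongly convex and its gradient is `L`-Lipschitz. -/
theorem cost_hessian_bounds_and_lipschitz_gradient
    {nm n q : ℕ} (δ ε : ℝ) (H : Matrix (Fin nm) (Fin nm) ℝ)
    (F : Matrix (Fin n) (Fin nm) ℝ) (Y : Matrix (Fin n) (Fin n) ℝ)
    (G : Matrix (Fin q) (Fin nm) ℝ) (E : Matrix (Fin q) (Fin n) ℝ) (d w : Fin q → ℝ)
    (σ L wbar : ℝ)
    (hδ : 0 < δ) (hε : 0 < ε)
    (hd : ∀ i, 0 < d i) (hw : ∀ i, 0 ≤ w i)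
    (hHsymm : H.IsSymm) (hYsymm : Y.IsSymm)
    (hHpd : ∀ v : Fin nm → ℝ, v ≠ 0 → 0 < v ⬝ᵥ H.mulVec v)
    (hwbar : IsGreatest (Set.range w) wbar)
    (hσ : IsGreatest {c : ℝ | ∀ v : Fin nm → ℝ, c * (v ⬝ᵥ v) ≤ v ⬝ᵥ H.mulVec v} σ)
    (hL : IsLeast {c : ℝ | ∀ v : Fin nm → ℝ,
      v ⬝ᵥ (H + ((ε * (1 + wbar)) / δ ^ 2) • (Gᵀ * G)).mulVec v ≤ c * (v ⬝ᵥ v)} L) :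
    0 < σ ∧
    (∀ x : Fin n → ℝ, ContDiff ℝ 2 (fun U => Jcost δ ε H F Y G E d w U x)) ∧
    (∀ (x : Fin n → ℝ) (U v : Fin nm → ℝ),
      σ * (v ⬝ᵥ v) ≤
          (fderiv ℝ (fderiv ℝ (fun U' => Jcost δ ε H F Y G E d w U' x)) U) v v ∧
        (fderiv ℝ (fderiv ℝ (fun U' => Jcost δ ε H F Y G E d w U' x)) U) v v ≤
          L * (v ⬝ᵥ v)) ∧
    (∀ (x : Fin n → ℝ) (U₁ U₂ : Fin nm → ℝ) (t : ℝ), 0 ≤ t → t ≤ 1 →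
      Jcost δ ε H F Y G E d w (t • U₁ + (1 - t) • U₂) x ≤
        t * Jcost δ ε H F Y G E d w U₁ x + (1 - t) * Jcost δ ε H F Y G E d w U₂ x -
          (σ / 2) * t * (1 - t) * ((U₁ - U₂) ⬝ᵥ (U₁ - U₂))) ∧
    (∀ (x : Fin n → ℝ) (U₁ U₂ : Fin nm → ℝ),
      euclNorm (gradVec (fun U' => Jcost δ ε H F Y G E d w U' x) U₁ -
          gradVec (fun U' => Jcost δ ε H F Y G E d w U' x) U₂) ≤
        L * euclNorm (U₁ - U₂)) :=
  cost_hessian_bounds_and_lipschitz_gradient_general δ ε H F Y G E d w σ L wbar hδ hε hw hHsymm hHpd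
    hwbar hσ hL
end

section
/- Consider the closed-loop system and assume: Ĵ_N is given in the sum form with B̂_x ≥ 0 and B̂_u ≥ 0 pointwise; the shift decrease condition Ĵ_N(Ψ_s(U,x), Ax+BΠ₀U) − Ĵ_N(U,x) ≤ −ℓ̂(x,Π₀U) and the optimizer decrease condition Ĵ_N(Ψ_o(U,x),x) − Ĵ_N(U,x) ≤ −γ(U,x) with γ ≥ 0 hold for all (U,x); Ĵ_N ≥ 0; the closed-loop state trajectory satisfies x(k) → 0 as k → ∞; and P*_uc is a symmetric positive semidefinite solution of the DARE P*_uc = AᵀP*_uc A − AᵀP*_uc B(R + BᵀP*_uc B)⁻¹BᵀP*_uc A + Q. Then for every k ∈ ℕ, with u(k) = Π₀U(k): ε·B̂_x(x(k)) ≤ Ĵ_N(U(k),x(k)) − x(k)ᵀP*_uc x(k) and ε·B̂_u(u(k)) ≤ Ĵ_N(U(k),x(k)) − x(k)ᵀP*_uc x(k). -/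
open Matrix

/-- Predicted states: `x₀(U,x) = x`, `x_{k+1}(U,x) = A x_k(U,x) + B u_k`. -/
noncomputable def predState {n m N : ℕ} (A : Matrix (Fin n) (Fin n) ℝ)
    (B : Matrix (Fin n) (Fin m) ℝ) (u : Fin N → Fin m → ℝ) (x : Fin n → ℝ) :
    ℕ → Fin n → ℝ
  | 0 => x
  | k + 1 => A.mulVec (predState A B u x k) +
      (if h : k < N then B.mulVec (u ⟨k, h⟩) else 0)

/-- The relaxed stage cost `ℓ̂(x,u) = xᵀQx + uᵀRu + ε B̂_x(x) + ε B̂_u(u)`. -/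
noncomputable def stageCost {n m : ℕ} (Q : Matrix (Fin n) (Fin n) ℝ)
    (R : Matrix (Fin m) (Fin m) ℝ) (ε : ℝ)
    (Bx : (Fin n → ℝ) → ℝ) (Bu : (Fin m → ℝ) → ℝ)
    (x : Fin n → ℝ) (u : Fin m → ℝ) : ℝ :=
  x ⬝ᵥ Q.mulVec x + u ⬝ᵥ R.mulVec u + ε * Bx x + ε * Bu u

/-- The relaxed barrier function based MPC cost. -/
noncomputable def mpcCost {n m N : ℕ} (A : Matrix (Fin n) (Fin n) ℝ)
    (B : Matrix (Fin n) (Fin m) ℝ) (Q : Matrix (Fin n) (Fin n) ℝ)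
    (R : Matrix (Fin m) (Fin m) ℝ) (P : Matrix (Fin n) (Fin n) ℝ) (ε : ℝ)
    (Bx : (Fin n → ℝ) → ℝ) (Bu : (Fin m → ℝ) → ℝ)
    (u : Fin N → Fin m → ℝ) (x : Fin n → ℝ) : ℝ :=
  (∑ k : Fin N, stageCost Q R ε Bx Bu (predState A B u x k) (u k)) +
    (predState A B u x N) ⬝ᵥ P.mulVec (predState A B u x N)

/-- The shift operator `Ψ_s(U,x) = (u₁,…,u_{N−1}, k_f(U,x))`. -/
def shiftOp {n m N : ℕ} (kf : (Fin N → Fin m → ℝ) → (Fin n → ℝ) → Fin m → ℝ)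
    (u : Fin N → Fin m → ℝ) (x : Fin n → ℝ) : Fin N → Fin m → ℝ :=
  fun i => if h : (i : ℕ) + 1 < N then u ⟨(i : ℕ) + 1, h⟩ else kf u x

/-- The iterated optimization operator. -/
def PhiIter {n m N : ℕ} [NeZero N] (A : Matrix (Fin n) (Fin n) ℝ)
    (B : Matrix (Fin n) (Fin m) ℝ)
    (kf : (Fin N → Fin m → ℝ) → (Fin n → ℝ) → Fin m → ℝ)
    (Ψo : (Fin N → Fin m → ℝ) → (Fin n → ℝ) → Fin N → Fin m → ℝ) :
    ℕ → (Fin N → Fin m → ℝ) → (Fin n → ℝ) → Fin N → Fin m → ℝ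
  | 0, u, x => shiftOp kf u x
  | i + 1, u, x => Ψo (PhiIter A B kf Ψo i u x) (A.mulVec x + B.mulVec (u 0))

/-- The closed-loop system `x(k+1) = Ax(k) + BΠ₀U(k)`, `U(k+1) = Φ^{i_T(k)}(U(k),x(k))`. -/
def cloop {n m N : ℕ} [NeZero N] (A : Matrix (Fin n) (Fin n) ℝ)
    (B : Matrix (Fin n) (Fin m) ℝ)
    (kf : (Fin N → Fin m → ℝ) → (Fin n → ℝ) → Fin m → ℝ)
    (Ψo : (Fin N → Fin m → ℝ) → (Fin n → ℝ) → Fin N → Fin m → ℝ)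
    (iT : ℕ → ℕ) (U0 : Fin N → Fin m → ℝ) (x0 : Fin n → ℝ) :
    ℕ → (Fin N → Fin m → ℝ) × (Fin n → ℝ)
  | 0 => (U0, x0)
  | k + 1 =>
    (PhiIter A B kf Ψo (iT k) (cloop A B kf Ψo iT U0 x0 k).1 (cloop A B kf Ψo iT U0 x0 k).2,
      A.mulVec (cloop A B kf Ψo iT U0 x0 k).2 + B.mulVec ((cloop A B kf Ψo iT U0 x0 k).1 0))


/-!
The Riccati equation says exactly that the Schur complement of `R + BᵀP*B` in the block matrix
`[[Q + AᵀP*A - P*, AᵀP*B], [BᵀP*A, R + BᵀP*B]]` vanishes (`P* = P*_uc`), so this matrix is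
positive semidefinite; its quadratic form at `(x, u)` is the Bellman inequality
`xᵀP*x ≤ xᵀQx + uᵀRu + (Ax + Bu)ᵀP*(Ax + Bu)`. Along the closed loop the shift lowers the cost
by the stage cost and optimizer steps never raise it, so `W k = Ĵ_N(U(k), x(k)) - x(k)ᵀP*x(k)`
drops by at least `ε B̂_x(x(k)) + ε B̂_u(u(k))` per step. As `Ĵ_N ≥ 0` and `x(k) → 0`, the
decreasing sequence `W` stays nonnegative, hence
`ε B̂_x(x(k)) + ε B̂_u(u(k)) ≤ W k - W (k + 1) ≤ W k`.
-/

open Filter Topology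

theorem Matrix.dotProduct_transpose_mul_mul_mulVec {ι κ : Type*} [Fintype ι] [Fintype κ]
    (G : Matrix ι κ ℝ) (P : Matrix ι ι ℝ) (v : κ → ℝ) :
    v ⬝ᵥ (Gᵀ * P * G) *ᵥ v = (G *ᵥ v) ⬝ᵥ P *ᵥ (G *ᵥ v) := by
  rw [← mulVec_mulVec, ← mulVec_mulVec, dotProduct_mulVec, vecMul_transpose]

theorem dare_bellman_inequality {ι κ : Type*} [Fintype ι] [Fintype κ] [DecidableEq κ]
    {A Q P : Matrix ι ι ℝ} {B : Matrix ι κ ℝ} {R : Matrix κ κ ℝ}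
    (hR : R.PosDef) (hP : P.PosSemidef)
    (hDARE : P = Aᵀ * P * A - Aᵀ * P * B * (R + Bᵀ * P * B)⁻¹ * Bᵀ * P * A + Q)
    (x : ι → ℝ) (u : κ → ℝ) :
    x ⬝ᵥ P *ᵥ x ≤
      x ⬝ᵥ Q *ᵥ x + u ⬝ᵥ R *ᵥ u + (A *ᵥ x + B *ᵥ u) ⬝ᵥ P *ᵥ (A *ᵥ x + B *ᵥ u) := by
  have hPt : Pᵀ = P := by simpa using hP.isHermitian.eq
  have hS : (R + Bᵀ * P * B).PosDef := by
    simpa using hR.add_posSemidef (hP.conjTranspose_mul_mul_same B)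
  let := hS.isUnit.invertible
  set G : Matrix ι (ι ⊕ κ) ℝ := fromCols A B
  have hblocks : fromBlocks (Q - P) 0 0 R + Gᵀ * P * G =
      fromBlocks (Q - P + Aᵀ * P * A) (Aᵀ * P * B) (Aᵀ * P * B)ᴴ (R + Bᵀ * P * B) := by
    simp [G, transpose_fromCols, fromBlocks_add, Matrix.mul_assoc, hPt]
  have hpsd : (fromBlocks (Q - P) 0 0 R + Gᵀ * P * G).PosSemidef := by
    rw [hblocks, hS.fromBlocks₂₂]
    convert PosSemidef.zero using 1
    rw [conjTranspose_eq_transpose_of_trivial]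
    simp only [transpose_mul, transpose_transpose, hPt, Matrix.mul_assoc]
    rw [← sub_eq_zero.mpr hDARE.symm]
    simp only [Matrix.mul_assoc]
    abel
  have hquad := (posSemidef_iff_dotProduct_mulVec.mp hpsd).2 (Sum.elim x u)
  rw [star_trivial, add_mulVec, dotProduct_add, dotProduct_transpose_mul_mul_mulVec,
    fromCols_mulVec_sumElim, fromBlocks_mulVec] at hquad
  simp only [Sum.elim_comp_inl, Sum.elim_comp_inr, sumElim_dotProduct_sumElim, sub_mulVec,
    zero_mulVec, add_zero, zero_add, dotProduct_sub] at hquad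
  linarith

theorem le_of_succ_add_le_of_lower_bound_tendsto_zero {W b c : ℕ → ℝ}
    (hstep : ∀ k, W (k + 1) + b k ≤ W k) (hb : ∀ k, 0 ≤ b k)
    (hlow : ∀ k, -c k ≤ W k) (hc : Tendsto c atTop (𝓝 0)) (k : ℕ) :
    b k ≤ W k := by
  have hanti : Antitone W :=
    antitone_nat_of_succ_le fun j => by linarith [hstep j, hb j]
  have hnonneg : 0 ≤ W (k + 1) := by
    refine le_of_tendsto (f := fun j => -c j) (by simpa using hc.neg) ?_
    filter_upwards [eventually_ge_atTop (k + 1)] with j hj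
    exact (hlow j).trans (hanti hj)
  linarith [hstep k]

section ClosedLoop

variable {n m N : ℕ} [NeZero N] (A : Matrix (Fin n) (Fin n) ℝ) (B : Matrix (Fin n) (Fin m) ℝ)
  (Q : Matrix (Fin n) (Fin n) ℝ) (R : Matrix (Fin m) (Fin m) ℝ) (P : Matrix (Fin n) (Fin n) ℝ)
  (ε : ℝ) (Bx : (Fin n → ℝ) → ℝ) (Bu : (Fin m → ℝ) → ℝ)
  (kf : (Fin N → Fin m → ℝ) → (Fin n → ℝ) → Fin m → ℝ)
  (Ψo : (Fin N → Fin m → ℝ) → (Fin n → ℝ) → Fin N → Fin m → ℝ)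

theorem mpcCost_PhiIter_le_shiftOp
    (hopt : ∀ u x, mpcCost A B Q R P ε Bx Bu (Ψo u x) x ≤ mpcCost A B Q R P ε Bx Bu u x)
    (i : ℕ) (u : Fin N → Fin m → ℝ) (x : Fin n → ℝ) :
    mpcCost A B Q R P ε Bx Bu (PhiIter A B kf Ψo i u x) (A *ᵥ x + B *ᵥ u 0) ≤
      mpcCost A B Q R P ε Bx Bu (shiftOp kf u x) (A *ᵥ x + B *ᵥ u 0) := by
  induction i with
  | zero => rfl
  | succ i ih => exact (hopt _ _).trans ih

theorem mpcCost_cloop_succ_le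
    (hshift : ∀ u x, mpcCost A B Q R P ε Bx Bu (shiftOp kf u x) (A *ᵥ x + B *ᵥ u 0) -
      mpcCost A B Q R P ε Bx Bu u x ≤ -(stageCost Q R ε Bx Bu x (u 0)))
    (hopt : ∀ u x, mpcCost A B Q R P ε Bx Bu (Ψo u x) x ≤ mpcCost A B Q R P ε Bx Bu u x)
    (iT : ℕ → ℕ) (U0 : Fin N → Fin m → ℝ) (x0 : Fin n → ℝ) (k : ℕ) :
    mpcCost A B Q R P ε Bx Bu (cloop A B kf Ψo iT U0 x0 (k + 1)).1
        (cloop A B kf Ψo iT U0 x0 (k + 1)).2 ≤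
      mpcCost A B Q R P ε Bx Bu (cloop A B kf Ψo iT U0 x0 k).1 (cloop A B kf Ψo iT U0 x0 k).2 -
        stageCost Q R ε Bx Bu (cloop A B kf Ψo iT U0 x0 k).2 ((cloop A B kf Ψo iT U0 x0 k).1 0) :=
  (mpcCost_PhiIter_le_shiftOp A B Q R P ε Bx Bu kf Ψo hopt (iT k) _ _).trans
    (by linarith [hshift (cloop A B kf Ψo iT U0 x0 k).1 (cloop A B kf Ψo iT U0 x0 k).2])

end ClosedLoop

theorem barrier_bounds_along_trajectory_general
    {n m N : ℕ} [NeZero N]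
    (A : Matrix (Fin n) (Fin n) ℝ) (B : Matrix (Fin n) (Fin m) ℝ)
    (Q : Matrix (Fin n) (Fin n) ℝ) (R : Matrix (Fin m) (Fin m) ℝ)
    (P Puc : Matrix (Fin n) (Fin n) ℝ) (ε : ℝ) (hε : 0 < ε)
    (Bx : (Fin n → ℝ) → ℝ) (Bu : (Fin m → ℝ) → ℝ)
    (kf : (Fin N → Fin m → ℝ) → (Fin n → ℝ) → Fin m → ℝ)
    (Ψo : (Fin N → Fin m → ℝ) → (Fin n → ℝ) → Fin N → Fin m → ℝ)
    (γ : (Fin N → Fin m → ℝ) → (Fin n → ℝ) → ℝ)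
    (iT : ℕ → ℕ) (U0 : Fin N → Fin m → ℝ) (x0 : Fin n → ℝ)
    (hRsymm : R.IsSymm) (hRpd : ∀ u : Fin m → ℝ, u ≠ 0 → 0 < u ⬝ᵥ R.mulVec u)
    (hBxnonneg : ∀ x : Fin n → ℝ, 0 ≤ Bx x) (hBunonneg : ∀ u : Fin m → ℝ, 0 ≤ Bu u)
    (hshift : ∀ (u : Fin N → Fin m → ℝ) (x : Fin n → ℝ),
      mpcCost A B Q R P ε Bx Bu (shiftOp kf u x) (A.mulVec x + B.mulVec (u 0)) -
          mpcCost A B Q R P ε Bx Bu u x ≤ -(stageCost Q R ε Bx Bu x (u 0)))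
    (hopt : ∀ (u : Fin N → Fin m → ℝ) (x : Fin n → ℝ),
      mpcCost A B Q R P ε Bx Bu (Ψo u x) x - mpcCost A B Q R P ε Bx Bu u x ≤ -(γ u x))
    (hγnonneg : ∀ (u : Fin N → Fin m → ℝ) (x : Fin n → ℝ), 0 ≤ γ u x)
    (hJnonneg : ∀ (u : Fin N → Fin m → ℝ) (x : Fin n → ℝ),
      0 ≤ mpcCost A B Q R P ε Bx Bu u x)
    (hxconv : Filter.Tendsto (fun k => (cloop A B kf Ψo iT U0 x0 k).2)
      Filter.atTop (nhds 0))
    (hPucsymm : Puc.IsSymm) (hPucpsd : ∀ x : Fin n → ℝ, 0 ≤ x ⬝ᵥ Puc.mulVec x)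
    (hDARE : Puc = Aᵀ * Puc * A -
      Aᵀ * Puc * B * (R + Bᵀ * Puc * B)⁻¹ * Bᵀ * Puc * A + Q) :
    ∀ k : ℕ,
      ε * Bx (cloop A B kf Ψo iT U0 x0 k).2 ≤
        mpcCost A B Q R P ε Bx Bu (cloop A B kf Ψo iT U0 x0 k).1
            (cloop A B kf Ψo iT U0 x0 k).2 -
          (cloop A B kf Ψo iT U0 x0 k).2 ⬝ᵥ Puc.mulVec (cloop A B kf Ψo iT U0 x0 k).2 ∧
      ε * Bu ((cloop A B kf Ψo iT U0 x0 k).1 0) ≤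
        mpcCost A B Q R P ε Bx Bu (cloop A B kf Ψo iT U0 x0 k).1
            (cloop A B kf Ψo iT U0 x0 k).2 -
          (cloop A B kf Ψo iT U0 x0 k).2 ⬝ᵥ Puc.mulVec (cloop A B kf Ψo iT U0 x0 k).2 := by
  have hR : R.PosDef := .of_dotProduct_mulVec_pos (by simpa using hRsymm) (by simpa using hRpd)
  have hPuc : Puc.PosSemidef :=
    .of_dotProduct_mulVec_nonneg (by simpa using hPucsymm) (by simpa using hPucpsd)
  have hopt' (u x) : mpcCost A B Q R P ε Bx Bu (Ψo u x) x ≤ mpcCost A B Q R P ε Bx Bu u x := by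
    linarith [hopt u x, hγnonneg u x]
  have hquad : Continuous fun y : Fin n → ℝ => y ⬝ᵥ Puc *ᵥ y :=
    continuous_id.dotProduct (continuous_const.matrix_mulVec continuous_id)
  set z := cloop A B kf Ψo iT U0 x0
  have hBx (k) : 0 ≤ ε * Bx (z k).2 := mul_nonneg hε.le (hBxnonneg _)
  have hBu (k) : 0 ≤ ε * Bu ((z k).1 0) := mul_nonneg hε.le (hBunonneg _)
  have hbarrier : ∀ k, ε * Bx (z k).2 + ε * Bu ((z k).1 0) ≤
      mpcCost A B Q R P ε Bx Bu (z k).1 (z k).2 - (z k).2 ⬝ᵥ Puc *ᵥ (z k).2 := by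
    refine le_of_succ_add_le_of_lower_bound_tendsto_zero (fun k => ?_)
      (fun k => add_nonneg (hBx k) (hBu k)) (fun k => by linarith [hJnonneg (z k).1 (z k).2]) ?_
    · have hdecrease := mpcCost_cloop_succ_le A B Q R P ε Bx Bu kf Ψo hshift hopt' iT U0 x0 k
      have hbellman := dare_bellman_inequality hR hPuc hDARE (z k).2 ((z k).1 0)
      unfold stageCost at hdecrease
      change _ ≤ _ + _ + (z (k + 1)).2 ⬝ᵥ Puc *ᵥ (z (k + 1)).2 at hbellman
      linarith
    · simpa [Function.comp_def] using (hquad.tendsto' 0 0 (by simp)).comp hxconv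
  exact fun k => ⟨by linarith [hbarrier k, hBu k], by linarith [hbarrier k, hBx k]⟩

/-- Along closed-loop trajectories, the barrier function values are bounded by the
difference between the current cost and the unconstrained LQR value
`x(k)ᵀ P*_uc x(k)`. -/
theorem barrier_bounds_along_trajectory
    {n m N : ℕ} [NeZero N]
    (A : Matrix (Fin n) (Fin n) ℝ) (B : Matrix (Fin n) (Fin m) ℝ)
    (Q : Matrix (Fin n) (Fin n) ℝ) (R : Matrix (Fin m) (Fin m) ℝ)
    (P Puc : Matrix (Fin n) (Fin n) ℝ) (ε : ℝ) (hε : 0 < ε)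
    (Bx : (Fin n → ℝ) → ℝ) (Bu : (Fin m → ℝ) → ℝ)
    (kf : (Fin N → Fin m → ℝ) → (Fin n → ℝ) → Fin m → ℝ)
    (Ψo : (Fin N → Fin m → ℝ) → (Fin n → ℝ) → Fin N → Fin m → ℝ)
    (γ : (Fin N → Fin m → ℝ) → (Fin n → ℝ) → ℝ)
    (iT : ℕ → ℕ) (U0 : Fin N → Fin m → ℝ) (x0 : Fin n → ℝ)
    (hQsymm : Q.IsSymm) (hQpsd : ∀ x : Fin n → ℝ, 0 ≤ x ⬝ᵥ Q.mulVec x)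
    (hRsymm : R.IsSymm) (hRpd : ∀ u : Fin m → ℝ, u ≠ 0 → 0 < u ⬝ᵥ R.mulVec u)
    (hPsymm : P.IsSymm) (hPpd : ∀ x : Fin n → ℝ, x ≠ 0 → 0 < x ⬝ᵥ P.mulVec x)
    (hBxnonneg : ∀ x : Fin n → ℝ, 0 ≤ Bx x) (hBunonneg : ∀ u : Fin m → ℝ, 0 ≤ Bu u)
    (hshift : ∀ (u : Fin N → Fin m → ℝ) (x : Fin n → ℝ),
      mpcCost A B Q R P ε Bx Bu (shiftOp kf u x) (A.mulVec x + B.mulVec (u 0)) -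
          mpcCost A B Q R P ε Bx Bu u x ≤ -(stageCost Q R ε Bx Bu x (u 0)))
    (hopt : ∀ (u : Fin N → Fin m → ℝ) (x : Fin n → ℝ),
      mpcCost A B Q R P ε Bx Bu (Ψo u x) x - mpcCost A B Q R P ε Bx Bu u x ≤ -(γ u x))
    (hγnonneg : ∀ (u : Fin N → Fin m → ℝ) (x : Fin n → ℝ), 0 ≤ γ u x)
    (hJnonneg : ∀ (u : Fin N → Fin m → ℝ) (x : Fin n → ℝ),
      0 ≤ mpcCost A B Q R P ε Bx Bu u x)
    (hxconv : Filter.Tendsto (fun k => (cloop A B kf Ψo iT U0 x0 k).2)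
      Filter.atTop (nhds 0))
    (hPucsymm : Puc.IsSymm) (hPucpsd : ∀ x : Fin n → ℝ, 0 ≤ x ⬝ᵥ Puc.mulVec x)
    (hDARE : Puc = Aᵀ * Puc * A -
      Aᵀ * Puc * B * (R + Bᵀ * Puc * B)⁻¹ * Bᵀ * Puc * A + Q) :
    ∀ k : ℕ,
      ε * Bx (cloop A B kf Ψo iT U0 x0 k).2 ≤
        mpcCost A B Q R P ε Bx Bu (cloop A B kf Ψo iT U0 x0 k).1
            (cloop A B kf Ψo iT U0 x0 k).2 -
          (cloop A B kf Ψo iT U0 x0 k).2 ⬝ᵥ Puc.mulVec (cloop A B kf Ψo iT U0 x0 k).2 ∧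
      ε * Bu ((cloop A B kf Ψo iT U0 x0 k).1 0) ≤
        mpcCost A B Q R P ε Bx Bu (cloop A B kf Ψo iT U0 x0 k).1
            (cloop A B kf Ψo iT U0 x0 k).2 -
          (cloop A B kf Ψo iT U0 x0 k).2 ⬝ᵥ Puc.mulVec (cloop A B kf Ψo iT U0 x0 k).2 :=
  barrier_bounds_along_trajectory_general A B Q R P Puc ε hε Bx Bu kf Ψo γ iT U0 x0 hRsymm hRpd
    hBxnonneg hBunonneg hshift hopt hγnonneg hJnonneg hxconv hPucsymm hPucpsd hDARE
end
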